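/- Let k ∈ ℝ³ be nonzero and let h be a trace-free real symmetric 3×3 matrix. Then σ_k(Q)(h) = 0 if and only if there exists a vector Y ∈ ℝ³ such that h_{ij} = k_i (k×Y)_j + k_j (k×Y)_i; that is, the kernel of the symbol of Q on trace-free symmetric matrices equals the image of the symbol of L rot₁. -/

import Mathlib

open scoped BigOperators

/-- The Levi-Civita symbol `ε_{ijk}` on three indices. -/
def eps : Fin 3 → Fin 3 → Fin 3 → ℝ := fun i j k =>
  if (i, j, k) = ((0 : Fin 3), (1 : Fin 3), (2 : Fin 3)) ∨
     (i, j, k) = ((1 : Fin 3), (2 : Fin 3), (0 : Fin 3)) ∨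
     (i, j, k) = ((2 : Fin 3), (0 : Fin 3), (1 : Fin 3)) then 1
  else if (i, j, k) = ((2 : Fin 3), (1 : Fin 3), (0 : Fin 3)) ∨
     (i, j, k) = ((1 : Fin 3), (0 : Fin 3), (2 : Fin 3)) ∨
     (i, j, k) = ((0 : Fin 3), (2 : Fin 3), (1 : Fin 3)) then -1
  else 0

/-- The Kronecker delta `δ_{ij}`. -/
def kdelta (i j : Fin 3) : ℝ := if i = j then 1 else 0

/-- The cross product on `ℝ³`: `(a × b)_i = Σ_{j,l} ε_{ijl} a_j b_l`. -/
def cross (a b : Fin 3 → ℝ) : Fin 3 → ℝ := fun i => ∑ j, ∑ l, eps i j l * a j * b l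

/-- The symbol of `rot₂`:
`(σ_k(rot₂)(h))_{ij} = Σ_{ℓ,m} ( ε_{iℓm} k_ℓ h_{mj} + ε_{jℓm} k_ℓ h_{mi} )`. -/
def sigRot2 (k : Fin 3 → ℝ) (h : Fin 3 → Fin 3 → ℝ) : Fin 3 → Fin 3 → ℝ :=
  fun i j => ∑ l, ∑ m, (eps i l m * k l * h m j + eps j l m * k l * h m i)

/-- The symbol of `Q`:
`(σ_k(Q)(h))_{ij} = 2( 2 Σ_ℓ k_ℓ ( k_i h_{jℓ} + k_j h_{iℓ} )
  − (4/3) (Σ_{ℓ,m} k_ℓ k_m h_{ℓm}) δ_{ij} − 2 |k|² h_{ij}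
  + ( |k|² δ_{ij} − k_i k_j ) (tr h) )`. -/
noncomputable def sigQ (k : Fin 3 → ℝ) (h : Fin 3 → Fin 3 → ℝ) : Fin 3 → Fin 3 → ℝ :=
  fun i j => 2 * (2 * (∑ l, k l * (k i * h j l + k j * h i l))
    - (4/3) * (∑ l, ∑ m, k l * k m * h l m) * kdelta i j
    - 2 * (∑ l, k l ^ 2) * h i j
    + ((∑ l, k l ^ 2) * kdelta i j - k i * k j) * (∑ l, h l l))

/-!
For trace-free `h` the symbol reduces to `σ_k(Q)(h) = 4 (k ⊗ v + v ⊗ k - (2/3) (k·v) I - |k|² h)`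
with `v = h k`. Contracting `σ_k(Q)(h) = 0` with `k ⊗ k` leaves `(4/3) |k|² (k·v) = 0`, so `v ⟂ k`
and `|k|² h = k ⊗ v + v ⊗ k`; by the triple product expansion every vector orthogonal to `k ≠ 0` is
of the form `k × Y`. Conversely, if `h = k ⊗ w + w ⊗ k` with `w = k × Y ⟂ k`, then `h k = |k|² w`.
-/

open Matrix

theorem cross_eq_crossProduct (a b : Fin 3 → ℝ) : cross a b = a ⨯₃ b := by
  ext i
  fin_cases i <;> simp [cross, eps, cross_apply, Fin.sum_univ_three] <;> ring

theorem exists_crossProduct_eq_of_dotProduct_eq_zero {F : Type*} [Field F] {k v : Fin 3 → F}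
    (hk : k ⬝ᵥ k ≠ 0) (hv : k ⬝ᵥ v = 0) : ∃ Y, k ⨯₃ Y = v := by
  refine ⟨(k ⬝ᵥ k)⁻¹ • (v ⨯₃ k), ?_⟩
  rw [map_smul, cross_cross_eq_smul_sub_smul', dotProduct_comm v k, hv, zero_smul, sub_zero,
    smul_smul, inv_mul_cancel₀ hk, one_smul]

theorem mulVec_eq_dotProduct_self_smul {n R : Type*} [Fintype n] [CommRing R]
    {h : Matrix n n R} {k w : n → R} (hw : k ⬝ᵥ w = 0) (hh : ∀ i j, h i j = k i * w j + k j * w i) :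
    h *ᵥ k = (k ⬝ᵥ k) • w := by
  ext i
  simp only [mulVec, dotProduct, hh, Pi.smul_apply, smul_eq_mul, Finset.sum_mul]
  rw [← sub_eq_zero, ← Finset.sum_sub_distrib, ← mul_zero (k i), ← hw, dotProduct, Finset.mul_sum]
  exact Finset.sum_congr rfl fun j _ => by ring

section Symbol

variable {k : Fin 3 → ℝ} {h : Matrix (Fin 3) (Fin 3) ℝ}

theorem sigQ_eq_of_trace_eq_zero (h_tracefree : ∑ i, h i i = 0) (i j : Fin 3) :
    sigQ k h i j = 4 * (k i * (h *ᵥ k) j + k j * (h *ᵥ k) i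
      - 2 / 3 * (k ⬝ᵥ h *ᵥ k) * kdelta i j - (k ⬝ᵥ k) * h i j) := by
  simp only [sigQ, h_tracefree, mulVec, dotProduct, Fin.sum_univ_three]
  ring

theorem sum_mul_mul_sigQ_of_trace_eq_zero (h_tracefree : ∑ i, h i i = 0) :
    ∑ i, ∑ j, k i * k j * sigQ k h i j = 4 / 3 * (k ⬝ᵥ k) * (k ⬝ᵥ h *ᵥ k) := by
  simp only [sigQ_eq_of_trace_eq_zero h_tracefree, mulVec, dotProduct, Fin.sum_univ_three, kdelta,
    Fin.isValue, mul_ite, mul_one, mul_zero, ↓reduceIte, Fin.reduceEq, sub_zero]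
  ring

theorem sigQ_eq_zero_iff (hk : k ≠ 0) (h_tracefree : ∑ i, h i i = 0) :
    (∀ i j, sigQ k h i j = 0) ↔
      k ⬝ᵥ h *ᵥ k = 0 ∧ ∀ i j, (k ⬝ᵥ k) * h i j = k i * (h *ᵥ k) j + k j * (h *ᵥ k) i := by
  have hσ := sigQ_eq_of_trace_eq_zero (k := k) h_tracefree
  constructor
  · intro hQ
    have hS : k ⬝ᵥ h *ᵥ k = 0 := by
      have hcontr := sum_mul_mul_sigQ_of_trace_eq_zero (k := k) h_tracefree
      simpa [hQ, dotProduct_self_eq_zero, hk] using hcontr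
    refine ⟨hS, fun i j => ?_⟩
    linear_combination (hσ i j - hQ i j) / 4 - 2 / 3 * kdelta i j * hS
  · rintro ⟨hS, hK⟩ i j
    linear_combination hσ i j - 4 * hK i j - 8 / 3 * kdelta i j * hS

end Symbol

theorem stmt15_general (k : Fin 3 → ℝ) (hk : k ≠ 0) (h : Fin 3 → Fin 3 → ℝ)
    (h_tracefree : ∑ i, h i i = 0) :
    (∀ i j, sigQ k h i j = 0) ↔
      ∃ Y : Fin 3 → ℝ, ∀ i j, h i j = k i * cross k Y j + k j * cross k Y i := by
  have hK : k ⬝ᵥ k ≠ 0 := dotProduct_self_eq_zero.not.mpr hk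
  simp only [sigQ_eq_zero_iff hk h_tracefree, cross_eq_crossProduct]
  constructor
  · rintro ⟨hS, hKh⟩
    obtain ⟨Y, hY⟩ := exists_crossProduct_eq_of_dotProduct_eq_zero hK
      (by rw [dotProduct_smul, hS, smul_zero] : k ⬝ᵥ (k ⬝ᵥ k)⁻¹ • (h *ᵥ k) = 0)
    refine ⟨Y, fun i j => ?_⟩
    simp only [hY, Pi.smul_apply, smul_eq_mul]
    field_simp
    linear_combination hKh i j
  · rintro ⟨Y, hY⟩
    have hv := mulVec_eq_dotProduct_self_smul (dot_self_cross k Y) hY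
    refine ⟨by rw [hv, dotProduct_smul, dot_self_cross, smul_zero], fun i j => ?_⟩
    rw [hv, hY]
    simp only [Pi.smul_apply, smul_eq_mul]
    ring

/-- for `k ≠ 0` and trace-free symmetric `h`, `σ_k(Q)(h) = 0` iff
`h_{ij} = k_i (k×Y)_j + k_j (k×Y)_i` for some `Y ∈ ℝ³`; the kernel of the symbol of `Q`
on trace-free symmetric matrices equals the image of the symbol of `L rot₁`. -/
theorem stmt15 (k : Fin 3 → ℝ) (hk : k ≠ 0) (h : Fin 3 → Fin 3 → ℝ)
    (h_symm : ∀ i j, h i j = h j i) (h_tracefree : ∑ i, h i i = 0) :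
    (∀ i j, sigQ k h i j = 0) ↔
      ∃ Y : Fin 3 → ℝ, ∀ i j, h i j = k i * cross k Y j + k j * cross k Y i :=
  stmt15_general k hk h h_tracefree
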